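/- For any complex N×K matrix A and any diagonal matrix Ω whose diagonal entries have unit modulus, ‖A^H Ω A‖_F² ≤ ‖A^H A‖_F², i.e., the identity matrix maximizes ‖A^H Ω A‖_F² over all unit-modulus diagonal matrices Ω. -/

import Mathlib

open Matrix Finset

/-- Squared Frobenius norm. -/
noncomputable def frobSq {m n : Type*} [Fintype m] [Fintype n] (M : Matrix m n ℂ) : ℝ :=
  ∑ i, ∑ j, (‖M i j‖) ^ 2

noncomputable def Bmat {N K : ℕ} (A : Matrix (Fin N) (Fin K) ℂ) (n m : Fin N) : ℂ :=
  ∑ j, A n j * (starRingEnd ℂ) (A m j)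

lemma entry_eq {N K : ℕ} (A : Matrix (Fin N) (Fin K) ℂ) (Ω : Matrix (Fin N) (Fin N) ℂ)
    (hdiag : Ω.IsDiag) (i j : Fin K) :
    (Aᴴ * Ω * A) i j = ∑ n, (starRingEnd ℂ) (A n i) * Ω n n * A n j := by
  simp only [Matrix.mul_apply, Matrix.conjTranspose_apply, Complex.star_def, Finset.sum_mul]
  refine Finset.sum_congr rfl fun n _ => ?_
  rw [Finset.sum_eq_single n (fun m _ hm => by rw [hdiag hm, mul_zero, zero_mul])
    (fun h => absurd (Finset.mem_univ n) h)]

lemma swap4 {N K : ℕ} {α : Type*} [AddCommMonoid α] (g : Fin K → Fin K → Fin N → Fin N → α) :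
    ∑ i, ∑ j, ∑ n, ∑ m, g i j n m = ∑ n, ∑ m, ∑ i, ∑ j, g i j n m := by
  calc ∑ i, ∑ j, ∑ n, ∑ m, g i j n m
      = ∑ i, ∑ n, ∑ j, ∑ m, g i j n m :=
        Finset.sum_congr rfl fun i _ => Finset.sum_comm
    _ = ∑ n, ∑ i, ∑ j, ∑ m, g i j n m := Finset.sum_comm
    _ = ∑ n, ∑ i, ∑ m, ∑ j, g i j n m :=
        Finset.sum_congr rfl fun n _ => Finset.sum_congr rfl fun i _ => Finset.sum_comm
    _ = ∑ n, ∑ m, ∑ i, ∑ j, g i j n m :=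
        Finset.sum_congr rfl fun n _ => Finset.sum_comm

lemma expand {N K : ℕ} (A : Matrix (Fin N) (Fin K) ℂ) (c : Fin N → ℂ) :
    ∑ i : Fin K, ∑ j : Fin K,
      (∑ n, (starRingEnd ℂ) (A n i) * c n * A n j) *
        (starRingEnd ℂ) (∑ n, (starRingEnd ℂ) (A n i) * c n * A n j)
    = ∑ n, ∑ m, c n * (starRingEnd ℂ) (c m) *
        ((starRingEnd ℂ) (Bmat A n m) * Bmat A n m) := by
  simp only [map_sum, Finset.sum_mul_sum]
  rw [swap4]
  refine Finset.sum_congr rfl fun n _ => Finset.sum_congr rfl fun m _ => ?_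
  simp only [Bmat, map_sum, _root_.map_mul, Complex.conj_conj, Finset.mul_sum, Finset.sum_mul]
  rw [Finset.sum_comm]
  refine Finset.sum_congr rfl fun i _ => Finset.sum_congr rfl fun j _ => ?_
  ring

lemma frobSq_eq {N K : ℕ} (A : Matrix (Fin N) (Fin K) ℂ) (Ω : Matrix (Fin N) (Fin N) ℂ)
    (hdiag : Ω.IsDiag) :
    frobSq (Aᴴ * Ω * A) = (∑ n, ∑ m, Ω n n * (starRingEnd ℂ) (Ω m m) *
        ((starRingEnd ℂ) (Bmat A n m) * Bmat A n m)).re := by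
  rw [← expand A (fun n => Ω n n)]
  rw [Complex.re_sum]
  unfold frobSq
  refine Finset.sum_congr rfl fun i _ => ?_
  rw [Complex.re_sum]
  refine Finset.sum_congr rfl fun j _ => ?_
  rw [entry_eq A Ω hdiag, Complex.sq_norm, Complex.mul_conj, Complex.ofReal_re]

/-- Theorem 1 of the paper: for any A ∈ ℂ^{N×K} and any diagonal Ω with
unit-modulus diagonal entries, ‖Aᴴ Ω A‖_F² ≤ ‖Aᴴ A‖_F², i.e. Ω = I maximizes the SNR. -/
theorem frobSq_AH_Omega_A_le_identity {N K : ℕ}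
    (A : Matrix (Fin N) (Fin K) ℂ) (Ω : Matrix (Fin N) (Fin N) ℂ)
    (hdiag : Ω.IsDiag) (hunit : ∀ n, ‖Ω n n‖ = 1) :
    frobSq (Aᴴ * Ω * A) ≤ frobSq (Aᴴ * A) := by
  have h1 : frobSq (Aᴴ * A) = ∑ n, ∑ m, Complex.normSq (Bmat A n m) := by
    have := frobSq_eq A 1 Matrix.isDiag_one
    rw [Matrix.mul_one] at this
    rw [this, Complex.re_sum]
    refine Finset.sum_congr rfl fun n _ => ?_
    rw [Complex.re_sum]
    refine Finset.sum_congr rfl fun m _ => ?_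
    simp [Complex.mul_conj', Complex.normSq_apply]
  rw [frobSq_eq A Ω hdiag, h1, Complex.re_sum]
  refine Finset.sum_le_sum fun n _ => ?_
  rw [Complex.re_sum]
  refine Finset.sum_le_sum fun m _ => ?_
  calc (Ω n n * (starRingEnd ℂ) (Ω m m) * ((starRingEnd ℂ) (Bmat A n m) * Bmat A n m)).re
      ≤ ‖Ω n n * (starRingEnd ℂ) (Ω m m) * ((starRingEnd ℂ) (Bmat A n m) * Bmat A n m)‖ :=
        Complex.re_le_norm _
    _ = Complex.normSq (Bmat A n m) := by
        simp [_root_.map_mul, Complex.norm_conj, hunit, ← Complex.sq_norm, sq]
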